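/- arXiv:1408.6879 — 4 statements merged into one kernel-verified Lean document; each statement's English description precedes it below -/
import Mathlib

section
/- (Finsler's lemma, null-space form) Let Q ∈ ℝ^{n×n} be symmetric and B ∈ ℝ^{m×n} with rank(B) = m < n. Let B⊥ ∈ ℝ^{n×(n−m)} be a matrix whose columns form a basis of the kernel of B. Then B⊥ᵀ Q B⊥ is negative definite if and only if there exists a matrix M ∈ ℝ^{n×m} such that Q + MB + BᵀMᵀ is negative definite. -/
/-!
Since `B * Bperp = 0`, the terms `MB` and `BᵀMᵀ` vanish after congruence by `Bperp`, and
congruence by the injective `Bperp` preserves definiteness; this gives `⇐`. For `⇒` take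
`M = -(σ/2) Bᵀ`, which turns the matrix into `σ BᵀB - Q`. The open sets
`{x | xᵀQx < k |Bx|²}`, `k ∈ ℕ`, increase with `k` and cover the unit sphere because `Q` is
negative definite on `ker B = range Bperp`; by compactness a single `k` works, and homogeneity
extends the inequality to all `x ≠ 0`.
-/

open Matrix

theorem IsCompact.exists_forall_lt_mul {X : Type*} [TopologicalSpace X] {K : Set X}
    (hK : IsCompact K) {f g : X → ℝ} (hf : Continuous f) (hg : Continuous g)
    (hg₀ : ∀ x, 0 ≤ g x) (hfg : ∀ x ∈ K, g x = 0 → f x < 0) :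
    ∃ σ : ℝ, ∀ x ∈ K, f x < σ * g x := by
  have hcover : K ⊆ ⋃ k : ℕ, {x | f x < k * g x} := by
    intro x hx
    rcases (hg₀ x).eq_or_lt with hgx | hgx
    · exact Set.mem_iUnion.2 ⟨0, by simpa using hfg x hx hgx.symm⟩
    · obtain ⟨k, hk⟩ := exists_nat_gt (f x / g x)
      exact Set.mem_iUnion.2 ⟨k, (div_lt_iff₀ hgx).1 hk⟩
  have hmono : Monotone fun k : ℕ => {x | f x < k * g x} := fun i j hij x hx =>
    hx.trans_le (mul_le_mul_of_nonneg_right (Nat.cast_le.2 hij) (hg₀ x))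
  obtain ⟨k, hk⟩ := hK.elim_directed_cover _
    (fun k => isOpen_lt hf (continuous_const.mul hg)) hcover hmono.directed_le
  exact ⟨k, hk⟩

theorem exists_forall_lt_mul_of_homogeneous {E : Type*} [NormedAddCommGroup E]
    [NormedSpace ℝ E] [ProperSpace E] {f g : E → ℝ} (hf : Continuous f) (hg : Continuous g)
    (hf_smul : ∀ (c : ℝ) x, f (c • x) = c ^ 2 * f x)
    (hg_smul : ∀ (c : ℝ) x, g (c • x) = c ^ 2 * g x)
    (hg₀ : ∀ x, 0 ≤ g x) (hfg : ∀ x ≠ 0, g x = 0 → f x < 0) :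
    ∃ σ : ℝ, ∀ x ≠ 0, f x < σ * g x := by
  obtain ⟨σ, hσ⟩ := (isCompact_sphere (0 : E) 1).exists_forall_lt_mul hf hg hg₀
    fun x hx => hfg x (ne_zero_of_mem_unit_sphere ⟨x, hx⟩)
  refine ⟨σ, fun x hx => ?_⟩
  have hunit : ‖x‖⁻¹ • x ∈ Metric.sphere (0 : E) 1 := by
    simpa using norm_smul_inv_norm (𝕜 := ℝ) hx
  have := hσ _ hunit
  rw [hf_smul, hg_smul, mul_left_comm] at this
  exact lt_of_mul_lt_mul_left this (by positivity)

namespace Matrix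

variable {n : Type*} [Fintype n]

theorem smul_dotProduct_mulVec_smul {R : Type*} [CommSemiring R] (A : Matrix n n R) (c : R)
    (x : n → R) : (c • x) ⬝ᵥ A *ᵥ (c • x) = c ^ 2 * (x ⬝ᵥ A *ᵥ x) := by
  simp only [mulVec_smul, smul_dotProduct, dotProduct_smul, smul_eq_mul]
  ring

theorem PosDef.dotProduct_mulVec_pos_of_mem_range {k R : Type*} [Fintype k] [CommRing R]
    [StarRing R] [PartialOrder R] {A : Matrix n n R} {C : Matrix n k R} (h : (Cᴴ * A * C).PosDef)
    {x : n → R} (hx : x ∈ LinearMap.range C.mulVecLin) (hx₀ : x ≠ 0) :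
    0 < star x ⬝ᵥ A *ᵥ x := by
  obtain ⟨y, rfl⟩ := hx
  have hy : y ≠ 0 := by rintro rfl; simp at hx₀
  have := h.dotProduct_mulVec_pos hy
  rwa [← mulVec_mulVec, ← mulVec_mulVec, dotProduct_mulVec, ← star_mulVec] at this

theorem transpose_mul_add_transpose_mul_mul_eq_zero {m k R : Type*} [Fintype m] [Fintype k]
    [CommRing R] {B : Matrix m n R} {C : Matrix n k R} (hBC : B * C = 0) (M : Matrix n m R) :
    Cᵀ * (M * B + Bᵀ * Mᵀ) * C = 0 := by
  have hCB : Cᵀ * Bᵀ = 0 := by rw [← transpose_mul, hBC, transpose_zero]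
  simp [Matrix.mul_add, Matrix.mul_assoc, hBC, ← Matrix.mul_assoc Cᵀ Bᵀ, hCB]

theorem exists_posDef_smul_sub {P Q : Matrix n n ℝ} (hP : P.PosSemidef) (hQ : Q.IsSymm)
    (h : ∀ x ≠ 0, P *ᵥ x = 0 → x ⬝ᵥ Q *ᵥ x < 0) : ∃ σ : ℝ, (σ • P - Q).PosDef := by
  have hP₀ (x : n → ℝ) : 0 ≤ x ⬝ᵥ P *ᵥ x := by simpa using hP.dotProduct_mulVec_nonneg x
  obtain ⟨σ, hσ⟩ := exists_forall_lt_mul_of_homogeneous (by fun_prop) (by fun_prop)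
    Q.smul_dotProduct_mulVec_smul P.smul_dotProduct_mulVec_smul hP₀
    fun x hx hPx => h x hx ((hP.dotProduct_mulVec_zero_iff x).1 (by simpa using hPx))
  refine ⟨σ, .of_dotProduct_mulVec_pos ?_ fun x hx => ?_⟩
  · exact (hP.isHermitian.smul (IsSelfAdjoint.all σ)).sub (isHermitian_iff_isSymm.2 hQ)
  · simpa [sub_mulVec, smul_mulVec] using hσ x hx


variable {K : Type*} [Field K] {l k : Type*} [Fintype k]

omit [Fintype n] in
theorem mulVec_injective_of_rank_eq_card {C : Matrix n k K} (hC : C.rank = Fintype.card k) :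
    Function.Injective C.mulVec := by
  rw [mulVec_injective_iff, linearIndependent_iff_card_eq_finrank_span, ← hC,
    rank_eq_finrank_span_cols]
  rfl

theorem range_mulVecLin_eq_ker_of_mul_eq_zero {A : Matrix l n K} {C : Matrix n k K}
    (hAC : A * C = 0) (hrank : A.rank + C.rank = Fintype.card n) :
    LinearMap.range C.mulVecLin = LinearMap.ker A.mulVecLin := by
  refine Submodule.eq_of_le_of_finrank_eq ?_ ?_
  · rintro _ ⟨y, rfl⟩
    simp [mulVec_mulVec, hAC]
  · have := A.mulVecLin.finrank_range_add_finrank_ker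
    rw [Module.finrank_fintype_fun_eq_card] at this
    change C.rank = _
    change A.rank + _ = _ at this
    omega

end Matrix

theorem finsler_lemma_general {n m : ℕ}
    (Q : Matrix (Fin n) (Fin n) ℝ) (hQ : Q.IsSymm)
    (B : Matrix (Fin m) (Fin n) ℝ) (hB : B.rank = m)
    (Bperp : Matrix (Fin n) (Fin (n - m)) ℝ)
    (hker : B * Bperp = 0) (hBperp : Bperp.rank = n - m) :
    (-(Bperpᵀ * Q * Bperp)).PosDef ↔
      ∃ M : Matrix (Fin n) (Fin m) ℝ, (-(Q + M * B + Bᵀ * Mᵀ)).PosDef := by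
  constructor
  · intro h
    have hrank : B.rank + Bperp.rank = Fintype.card (Fin n) := by
      have := hB ▸ B.rank_le_width
      rw [hB, hBperp, Fintype.card_fin]
      omega
    have hrange : LinearMap.range Bperp.mulVecLin = LinearMap.ker B.mulVecLin :=
      range_mulVecLin_eq_ker_of_mul_eq_zero hker hrank
    have hneg : ∀ x ≠ 0, (Bᴴ * B) *ᵥ x = 0 → x ⬝ᵥ Q *ᵥ x < 0 := by
      intro x hx hBBx
      have hBx : x ∈ LinearMap.ker B.mulVecLin := by
        rw [← ker_mulVecLin_transpose_mul_self, LinearMap.mem_ker, mulVecLin_apply]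
        simpa only [conjTranspose_eq_transpose_of_trivial] using hBBx
      have h' : (Bperpᴴ * -Q * Bperp).PosDef := by simpa using h
      simpa [neg_mulVec] using h'.dotProduct_mulVec_pos_of_mem_range (hrange ▸ hBx) hx
    obtain ⟨σ, hσ⟩ := exists_posDef_smul_sub (posSemidef_conjTranspose_mul_self B) hQ hneg
    refine ⟨-(σ / 2) • Bᵀ, ?_⟩
    convert hσ using 1
    simp only [transpose_smul, transpose_transpose, Matrix.smul_mul, Matrix.mul_smul,
      conjTranspose_eq_transpose_of_trivial]
    module
  · rintro ⟨M, hM⟩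
    have hcongr : -(Bperpᵀ * Q * Bperp) = Bperpᴴ * -(Q + M * B + Bᵀ * Mᵀ) * Bperp := by
      rw [conjTranspose_eq_transpose_of_trivial, add_assoc, Matrix.mul_neg, Matrix.neg_mul,
        Matrix.mul_add, Matrix.add_mul, transpose_mul_add_transpose_mul_mul_eq_zero hker, add_zero]
    rw [hcongr]
    exact hM.conjTranspose_mul_mul_same (mulVec_injective_of_rank_eq_card (by simpa using hBperp))

/-- Finsler's lemma, null-space form.  `B` has full row rank `m < n`, and the columns of
`Bperp` form a basis of the kernel of `B`.  Then `Bperpᵀ Q Bperp ≺ 0` iff there is a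
multiplier `M` with `Q + MB + BᵀMᵀ ≺ 0`. -/
theorem finsler_lemma {n m : ℕ} (hmn : m < n)
    (Q : Matrix (Fin n) (Fin n) ℝ) (hQ : Q.IsSymm)
    (B : Matrix (Fin m) (Fin n) ℝ) (hB : B.rank = m)
    (Bperp : Matrix (Fin n) (Fin (n - m)) ℝ)
    (hker : B * Bperp = 0) (hBperp : Bperp.rank = n - m) :
    (-(Bperpᵀ * Q * Bperp)).PosDef ↔
      ∃ M : Matrix (Fin n) (Fin m) ℝ, (-(Q + M * B + Bᵀ * Mᵀ)).PosDef :=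
  finsler_lemma_general Q hQ B hB Bperp hker hBperp
end

section
/- (Elimination lemma, two-constraint form) Let Q ∈ ℝ^{n×n} be symmetric, and let B, C be real matrices with n columns, each of full row rank. Denote by B⊥ and C⊥ matrices whose columns form bases of the kernels of B and C respectively. Then both B⊥ᵀ Q B⊥ ≺ 0 and C⊥ᵀ Q C⊥ ≺ 0 hold if and only if there exists a matrix V of appropriate dimensions such that Q + BᵀVC + CᵀVᵀB is negative definite. -/
/-!
Necessity: on `ker B` and on `ker C` the quadratic form of `Bᵀ V C + Cᵀ Vᵀ B` vanishes.

Sufficiency: let `L = ker B ⊓ ker C` and let `Z` be its `Q`-orthogonal complement, a complement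
because `Q` is negative definite on `L`. Split `ℝⁿ = L ⊕ (Z ⊓ ker B) ⊕ (Z ⊓ ker C) ⊕ U` and write
`x = s + p + t + u` accordingly, so that `t + u` vanishes on `ker B` and `p + u` on `ker C`. The
multiplier `M` with `xᵀ M x = -(t + u)ᵀ Q (p + u) + ½ (uᵀ Q u - uᵀ u)` gives
`xᵀ (Q + M + Mᵀ) x = (s + p)ᵀ Q (s + p) + tᵀ Q t - uᵀ u`, which is negative for `x ≠ 0` because
`s + p ∈ ker B` and `t ∈ ker C`. Finally `M` kills `ker C` on the right and `ker B` on the left,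
so it factors as `Bᵀ V C` through the surjections `B` and `C`.
-/

open Matrix

namespace DirectSum.IsInternal

variable {R M ι : Type*} [Ring R] [AddCommGroup M] [Module R M] [DecidableEq ι]
  {A : ι → Submodule R M} (h : IsInternal A)

noncomputable def proj (i : ι) : M →ₗ[R] M :=
  (A i).subtype ∘ₗ component R ι (fun i => A i) i ∘ₗ
    (LinearEquiv.ofBijective (coeLinearMap A) h).symm.toLinearMap

lemma proj_apply_mem (i : ι) (x : M) : h.proj i x ∈ A i := Submodule.coe_mem _

lemma proj_apply_of_mem {i : ι} {x : M} (hx : x ∈ A i) : h.proj i x = x := by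
  simp only [proj, LinearMap.comp_apply, LinearEquiv.coe_coe, ← apply_eq_component,
    h.ofBijective_coeLinearMap_of_mem hx, Submodule.subtype_apply]

lemma le_ker_proj {i j : ι} (hij : j ≠ i) : A j ≤ LinearMap.ker (h.proj i) := fun x hx => by
  simp only [LinearMap.mem_ker, proj, LinearMap.comp_apply, LinearEquiv.coe_coe,
    ← apply_eq_component, h.ofBijective_coeLinearMap_of_mem_ne hij hx, map_zero]

lemma sum_proj_apply [Fintype ι] (x : M) : ∑ i, h.proj i x = x := by
  have hx : x ∈ ⨆ i, A i := h.submodule_iSup_eq_top ▸ Submodule.mem_top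
  refine Submodule.iSup_induction A (motive := fun x => ∑ i, h.proj i x = x) hx
    (fun j y hy => ?_) (by simp) fun y z hy hz => ?_
  · rw [Finset.sum_eq_single j (fun i _ hij => h.le_ker_proj hij.symm hy) (by simp),
      h.proj_apply_of_mem hy]
  · simp only [map_add, Finset.sum_add_distrib, hy, hz]

end DirectSum.IsInternal

theorem iSupIndep_of_sum_eq_zero {R N ι : Type*} [Ring R] [AddCommGroup N] [Module R N]
    [Fintype ι] {p : ι → Submodule R N}
    (h : ∀ v : ι → N, (∀ i, v i ∈ p i) → ∑ i, v i = 0 → ∀ i, v i = 0) : iSupIndep p := by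
  classical
  rw [iSupIndep_iff_finsetSum_eq_zero_imp_eq_zero]
  intro s v hv hsum i hi
  simpa [hi] using h (fun j => if j ∈ s then v j else 0)
    (fun j => by split_ifs with hj; exacts [hv j hj, zero_mem _]) (by simpa using hsum) i

theorem IsCompl.sup_inf_eq_of_le {α : Type*} [Lattice α] [BoundedOrder α] [IsModularLattice α]
    {a b c : α} (h : IsCompl a b) (hac : a ≤ c) : a ⊔ b ⊓ c = c := by
  rw [← sup_inf_assoc_of_le _ hac, h.sup_eq_top, top_inf_eq]

section Splitting

variable {K E : Type*} [Field K] [AddCommGroup E] [Module K E] {K₁ K₂ Z U : Submodule K E}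

theorem iSupIndep_inf (hZ : Disjoint (K₁ ⊓ K₂) Z) (hU : Disjoint (Z ⊓ K₁ ⊔ Z ⊓ K₂) U)
    (hUZ : U ≤ Z) : iSupIndep ![K₁ ⊓ K₂, Z ⊓ K₁, Z ⊓ K₂, U] := by
  refine iSupIndep_of_sum_eq_zero fun v hv hsum => ?_
  simp only [Fin.sum_univ_four] at hsum
  have h0 := hv 0
  have h1 := hv 1
  have h2 := hv 2
  have h3 := hv 3
  simp only [Matrix.cons_val_zero, Matrix.cons_val_one, Matrix.cons_val_two,
    Matrix.cons_val_three, Submodule.mem_inf] at h0 h1 h2 h3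
  have hv0 : v 0 = 0 := by
    have : v 0 = -(v 1 + v 2 + v 3) := eq_neg_of_add_eq_zero_left (by rw [← hsum]; abel)
    refine Submodule.disjoint_def.mp hZ _ ⟨h0.1, h0.2⟩ ?_
    rw [this]
    exact Z.neg_mem (Z.add_mem (Z.add_mem h1.1 h2.1) (hUZ h3))
  have hv3 : v 3 = 0 := by
    have : v 3 = -(v 1 + v 2) := eq_neg_of_add_eq_zero_left (by rw [← hsum, hv0]; abel)
    refine Submodule.disjoint_def.mp hU.symm _ h3 ?_
    rw [this]
    exact neg_mem (Submodule.add_mem_sup h1 h2)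
  have hv12 : v 1 = -v 2 := eq_neg_of_add_eq_zero_left (by rw [← hsum, hv0, hv3]; abel)
  have hv1 : v 1 = 0 := by
    refine Submodule.disjoint_def.mp hZ _ ⟨h1.2, ?_⟩ h1.1
    rw [hv12]
    exact neg_mem h2.2
  have hv2 : v 2 = 0 := by rw [← neg_neg (v 2), ← hv12, hv1, neg_zero]
  intro i
  fin_cases i <;> assumption

theorem exists_isInternal_inf (hZ : IsCompl (K₁ ⊓ K₂) Z) :
    ∃ U ≤ Z, DirectSum.IsInternal ![K₁ ⊓ K₂, Z ⊓ K₁, Z ⊓ K₂, U] := by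
  obtain ⟨U, hU, hsup⟩ := IsModularLattice.exists_disjoint_and_sup_eq
    (sup_le (inf_le_left : Z ⊓ K₁ ≤ Z) (inf_le_left : Z ⊓ K₂ ≤ Z))
  have hUZ : U ≤ Z := hsup ▸ le_sup_right
  refine ⟨U, hUZ, DirectSum.isInternal_submodule_of_iSupIndep_of_iSup_eq_top
    (iSupIndep_inf hZ.disjoint hU hUZ) ?_⟩
  rw [eq_top_iff, ← hZ.sup_eq_top]
  refine sup_le (le_iSup_of_le 0 le_rfl) (hsup.ge.trans ?_)
  exact sup_le (sup_le (le_iSup_of_le 1 le_rfl) (le_iSup_of_le 2 le_rfl)) (le_iSup_of_le 3 le_rfl)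

theorem le_ker_proj_of_isInternal_inf (hZ : IsCompl (K₁ ⊓ K₂) Z)
    (h : DirectSum.IsInternal ![K₁ ⊓ K₂, Z ⊓ K₁, Z ⊓ K₂, U]) :
    K₁ ≤ LinearMap.ker (h.proj 2) ⊓ LinearMap.ker (h.proj 3) ∧
      K₂ ≤ LinearMap.ker (h.proj 1) ⊓ LinearMap.ker (h.proj 3) := by
  have hker (i j : Fin 4) (hij : j ≠ i) := h.le_ker_proj hij
  constructor
  · refine (hZ.sup_inf_eq_of_le inf_le_left).ge.trans ?_
    exact sup_le (le_inf (hker 2 0 (by decide)) (hker 3 0 (by decide)))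
      (le_inf (hker 2 1 (by decide)) (hker 3 1 (by decide)))
  · refine (hZ.sup_inf_eq_of_le inf_le_right).ge.trans ?_
    exact sup_le (le_inf (hker 1 0 (by decide)) (hker 3 0 (by decide)))
      (le_inf (hker 1 2 (by decide)) (hker 3 2 (by decide)))

end Splitting

namespace Matrix

lemma dotProduct_transpose_mul_mul_mulVec {R k l m n : Type*} [CommSemiring R] [Fintype k]
    [Fintype l] [Fintype m] [Fintype n] (A : Matrix k m R) (N : Matrix k l R) (D : Matrix l n R)
    (u : m → R) (w : n → R) : u ⬝ᵥ (Aᵀ * N * D) *ᵥ w = (A *ᵥ u) ⬝ᵥ N *ᵥ (D *ᵥ w) := by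
  rw [← mulVec_mulVec, ← mulVec_mulVec, dotProduct_mulVec, vecMul_transpose]

section Rank

variable {K k l m : Type*} [Field K]

lemma mulVec_injective_of_rank_eq [Fintype k] {P : Matrix m k K} (h : P.rank = Fintype.card k) :
    Function.Injective P.mulVec := by
  have := LinearMap.finrank_range_add_finrank_ker P.mulVecLin
  rw [Module.finrank_fintype_fun_eq_card, ← rank, h] at this
  rw [← coe_mulVecLin, ← LinearMap.ker_eq_bot, ← Submodule.finrank_eq_zero]
  omega

variable [Fintype m]

lemma range_mulVecLin_eq_top_of_rank_eq [Fintype k] {B : Matrix k m K}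
    (h : B.rank = Fintype.card k) : LinearMap.range B.mulVecLin = ⊤ :=
  Submodule.eq_top_of_finrank_eq (by rw [← rank, h, Module.finrank_fintype_fun_eq_card])

lemma range_mulVecLin_eq_ker_of_mul_eq_zero_s7 [Fintype l] {D : Matrix k m K} {P : Matrix m l K}
    (hDP : D * P = 0) (h : D.rank + P.rank = Fintype.card m) :
    LinearMap.range P.mulVecLin = LinearMap.ker D.mulVecLin := by
  refine Submodule.eq_of_le_of_finrank_eq ?_ ?_
  · rintro _ ⟨y, rfl⟩
    simp [mulVec_mulVec, hDP]
  · have := LinearMap.finrank_range_add_finrank_ker D.mulVecLin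
    rw [Module.finrank_fintype_fun_eq_card, ← rank] at this
    change P.rank = _
    omega

lemma exists_mul_eq_one_of_range_eq_top [Fintype k] [DecidableEq k] [DecidableEq m]
    {C : Matrix k m K} (hC : LinearMap.range C.mulVecLin = ⊤) :
    ∃ C' : Matrix m k K, C * C' = 1 := by
  obtain ⟨g, hg⟩ := C.mulVecLin.exists_rightInverse_of_surjective hC
  refine ⟨LinearMap.toMatrix' g, toLin'.injective ?_⟩
  rw [toLin'_mul, toLin'_toMatrix', toLin'_one]
  exact hg

lemma mul_mul_eq_self_of_ker_le [Fintype k] [DecidableEq k] {M : Matrix l m K}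
    {C : Matrix k m K} {C' : Matrix m k K} (hC : C * C' = 1)
    (h : LinearMap.ker C.mulVecLin ≤ LinearMap.ker M.mulVecLin) : M * C' * C = M := by
  refine ext_iff_mulVec.mpr fun v => ?_
  have : C' *ᵥ (C *ᵥ v) - v ∈ LinearMap.ker C.mulVecLin := by
    rw [LinearMap.mem_ker, mulVecLin_apply, mulVec_sub, mulVec_mulVec, hC, one_mulVec, sub_self]
  have := h this
  simp only [LinearMap.mem_ker, mulVecLin_apply, mulVec_sub, sub_eq_zero] at this
  rw [← this, mulVec_mulVec, mulVec_mulVec, Matrix.mul_assoc]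

lemma exists_eq_transpose_mul_mul_of_ker_le {n c : Type*} [Fintype k] [Fintype n] [Fintype c]
    [DecidableEq k] [DecidableEq c] [DecidableEq m] [DecidableEq n]
    {B : Matrix k m K} {C : Matrix c n K} {M : Matrix m n K}
    (hB : LinearMap.range B.mulVecLin = ⊤) (hC : LinearMap.range C.mulVecLin = ⊤)
    (hMB : LinearMap.ker B.mulVecLin ≤ LinearMap.ker Mᵀ.mulVecLin)
    (hMC : LinearMap.ker C.mulVecLin ≤ LinearMap.ker M.mulVecLin) :
    ∃ V : Matrix k c K, M = Bᵀ * V * C := by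
  obtain ⟨B', hB'⟩ := exists_mul_eq_one_of_range_eq_top hB
  obtain ⟨C', hC'⟩ := exists_mul_eq_one_of_range_eq_top hC
  have hMC' : M * C' * C = M := mul_mul_eq_self_of_ker_le hC' hMC
  have hB'M : Bᵀ * B'ᵀ * M = M := by
    simpa [Matrix.transpose_mul, Matrix.mul_assoc] using
      congrArg transpose (mul_mul_eq_self_of_ker_le hB' hMB)
  refine ⟨B'ᵀ * M * C', ?_⟩
  calc M = Bᵀ * B'ᵀ * (M * C' * C) := by rw [hMC', hB'M]
    _ = Bᵀ * (B'ᵀ * M * C') * C := by simp only [Matrix.mul_assoc]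

end Rank

variable {m : Type*} [Fintype m] {Q : Matrix m m ℝ}

def NegDefOn (Q : Matrix m m ℝ) (K : Submodule ℝ (m → ℝ)) : Prop :=
  ∀ x ∈ K, x ≠ 0 → x ⬝ᵥ Q *ᵥ x < 0

lemma NegDefOn.mono {K K' : Submodule ℝ (m → ℝ)} (h : Q.NegDefOn K) (hle : K' ≤ K) :
    Q.NegDefOn K' :=
  fun x hx => h x (hle hx)

lemma NegDefOn.dotProduct_mulVec_nonpos {K : Submodule ℝ (m → ℝ)} (h : Q.NegDefOn K)
    {x : m → ℝ} (hx : x ∈ K) : x ⬝ᵥ Q *ᵥ x ≤ 0 := by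
  rcases eq_or_ne x 0 with rfl | hx0
  · simp
  · exact (h x hx hx0).le

lemma posDef_neg_iff_negDefOn_top (hQ : Q.IsSymm) : (-Q).PosDef ↔ Q.NegDefOn ⊤ := by
  simp [posDef_iff_dotProduct_mulVec, NegDefOn, hQ.neg, neg_mulVec]

lemma posDef_neg_transpose_mul_mul_iff_negDefOn_ker {k l : Type*} [Fintype l] (hQ : Q.IsSymm)
    {D : Matrix k m ℝ} {P : Matrix m l ℝ} (hDP : D * P = 0)
    (hrank : D.rank + P.rank = Fintype.card m) (hP : P.rank = Fintype.card l) :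
    (-(Pᵀ * Q * P)).PosDef ↔ Q.NegDefOn (LinearMap.ker D.mulVecLin) := by
  have hsymm : (Pᵀ * Q * P).IsSymm := by
    simp [IsSymm, transpose_mul, hQ.eq, Matrix.mul_assoc]
  rw [posDef_neg_iff_negDefOn_top hsymm, ← range_mulVecLin_eq_ker_of_mul_eq_zero_s7 hDP hrank]
  simp only [NegDefOn, Submodule.mem_top, true_imp_iff, LinearMap.mem_range, mulVecLin_apply,
    forall_exists_index, forall_apply_eq_imp_iff, dotProduct_transpose_mul_mul_mulVec]
  exact forall_congr' fun y =>
    imp_congr_left ((mulVec_injective_of_rank_eq hP).ne_iff' (mulVec_zero P)).symm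

lemma NegDefOn.isCompl_orthogonal [DecidableEq m] (hQ : Q.IsSymm) {L : Submodule ℝ (m → ℝ)}
    (h : Q.NegDefOn L) : IsCompl L ((toBilin' Q).orthogonal L) := by
  rw [LinearMap.BilinForm.isCompl_orthogonal_iff_disjoint
    (isSymm_toBilin'_iff_isSymm.mpr hQ).isRefl, Submodule.disjoint_def]
  intro x hxL hxZ
  by_contra hx
  have hQx : x ⬝ᵥ Q *ᵥ x = 0 := by simpa [toBilin'_apply'] using hxZ x hxL
  exact (h x hxL hx).ne hQx

lemma NegDefOn.add_sub_dotProduct_self_neg {K₁ K₂ : Submodule ℝ (m → ℝ)} (h₁ : Q.NegDefOn K₁)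
    (h₂ : Q.NegDefOn K₂) {a b u : m → ℝ} (ha : a ∈ K₁) (hb : b ∈ K₂) (hne : a + b + u ≠ 0) :
    a ⬝ᵥ Q *ᵥ a + b ⬝ᵥ Q *ᵥ b - u ⬝ᵥ u < 0 := by
  have hqa := h₁.dotProduct_mulVec_nonpos ha
  have hqb := h₂.dotProduct_mulVec_nonpos hb
  rcases eq_or_ne u 0 with rfl | hu
  · rw [add_zero] at hne
    have : a ≠ 0 ∨ b ≠ 0 := by
      by_contra! h
      exact hne (by rw [h.1, h.2, add_zero])
    rcases this with h | h
    · linarith [h₁ a ha h, dotProduct_zero (0 : m → ℝ)]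
    · linarith [h₂ b hb h, dotProduct_zero (0 : m → ℝ)]
  · have := dotProduct_star_self_pos_iff.mpr hu
    rw [star_trivial] at this
    linarith

lemma dotProduct_mulVec_add_four (hQ : Q.IsSymm) {s p t u : m → ℝ} (hp : s ⬝ᵥ Q *ᵥ p = 0)
    (ht : s ⬝ᵥ Q *ᵥ t = 0) (hu : s ⬝ᵥ Q *ᵥ u = 0) :
    (s + p + t + u) ⬝ᵥ Q *ᵥ (s + p + t + u) - 2 * ((t + u) ⬝ᵥ Q *ᵥ (p + u)) + u ⬝ᵥ Q *ᵥ u =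
      (s + p) ⬝ᵥ Q *ᵥ (s + p) + t ⬝ᵥ Q *ᵥ t := by
  have (v w : m → ℝ) : v ⬝ᵥ Q *ᵥ w = w ⬝ᵥ Q *ᵥ v := by
    rw [← dotProduct_transpose_mulVec, hQ.eq]
  simp only [mulVec_add, dotProduct_add, add_dotProduct, this p s, this t s, this u s,
    this t p, this u p, this u t, hp, ht, hu]
  ring

lemma dotProduct_add_add_transpose_mulVec_of_eq [DecidableEq m] {A D P M : Matrix m m ℝ}
    (hM : M = -(Aᵀ * Q * D) + (1 / 2 : ℝ) • (Pᵀ * (Q - 1) * P)) (x : m → ℝ) :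
    x ⬝ᵥ (Q + M + Mᵀ) *ᵥ x = x ⬝ᵥ Q *ᵥ x - 2 * ((A *ᵥ x) ⬝ᵥ Q *ᵥ (D *ᵥ x)) +
      (P *ᵥ x) ⬝ᵥ Q *ᵥ (P *ᵥ x) - (P *ᵥ x) ⬝ᵥ (P *ᵥ x) := by
  subst hM
  simp only [add_mulVec, dotProduct_add, dotProduct_transpose_mulVec, neg_mulVec, dotProduct_neg,
    smul_mulVec, dotProduct_smul, dotProduct_transpose_mul_mul_mulVec, sub_mulVec, one_mulVec,
    dotProduct_sub, smul_eq_mul]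
  ring

theorem exists_negDefOn_top_add_add_transpose [DecidableEq m] (hQ : Q.IsSymm)
    {K₁ K₂ : Submodule ℝ (m → ℝ)} (h₁ : Q.NegDefOn K₁) (h₂ : Q.NegDefOn K₂) :
    ∃ M : Matrix m m ℝ, K₁ ≤ LinearMap.ker Mᵀ.mulVecLin ∧ K₂ ≤ LinearMap.ker M.mulVecLin ∧
      (Q + M + Mᵀ).NegDefOn ⊤ := by
  set Z := (toBilin' Q).orthogonal (K₁ ⊓ K₂)
  have hZ : IsCompl (K₁ ⊓ K₂) Z := (h₁.mono inf_le_left).isCompl_orthogonal hQ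
  obtain ⟨U, hUZ, hdec⟩ := exists_isInternal_inf hZ
  obtain ⟨hK₁, hK₂⟩ := le_ker_proj_of_isInternal_inf hZ hdec
  set π := hdec.proj
  set A := LinearMap.toMatrix' (π 2 + π 3)
  set D := LinearMap.toMatrix' (π 1 + π 3)
  set P := LinearMap.toMatrix' (π 3)
  have hA (y) : A *ᵥ y = π 2 y + π 3 y := LinearMap.toMatrix'_mulVec _ y
  have hD (y) : D *ᵥ y = π 1 y + π 3 y := LinearMap.toMatrix'_mulVec _ y
  have hP (y) : P *ᵥ y = π 3 y := LinearMap.toMatrix'_mulVec _ y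
  refine ⟨-(Aᵀ * Q * D) + (1 / 2 : ℝ) • (Pᵀ * (Q - 1) * P), fun x hx => ?_, fun x hx => ?_,
    fun x _ hx => ?_⟩
  · have h2 : π 2 x = 0 := (hK₁ hx).1
    have h3 : π 3 x = 0 := (hK₁ hx).2
    simp [transpose_mul, hQ.eq, hA, hP, h2, h3]
  · have h1 : π 1 x = 0 := (hK₂ hx).1
    have h3 : π 3 x = 0 := (hK₂ hx).2
    simp [hD, hP, h1, h3]
  · have hmem (i) : π i x ∈ ![K₁ ⊓ K₂, Z ⊓ K₁, Z ⊓ K₂, U] i := hdec.proj_apply_mem i x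
    have hs : π 0 x ∈ K₁ ⊓ K₂ := hmem 0
    have hp : π 1 x ∈ Z ⊓ K₁ := hmem 1
    have ht : π 2 x ∈ Z ⊓ K₂ := hmem 2
    have horth (z) (hz : z ∈ Z) : π 0 x ⬝ᵥ Q *ᵥ z = 0 := by
      simpa [toBilin'_apply'] using hz _ hs
    have hsum : π 0 x + π 1 x + π 2 x + π 3 x = x := by
      simpa [Fin.sum_univ_four] using hdec.sum_proj_apply x
    rw [← hsum] at hx
    convert h₁.add_sub_dotProduct_self_neg h₂ (K₁.add_mem hs.1 hp.2) ht.2 hx using 1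
    rw [dotProduct_add_add_transpose_mulVec_of_eq rfl, hA, hD, hP,
      ← dotProduct_mulVec_add_four hQ (horth _ hp.1) (horth _ ht.1) (horth _ (hUZ (hmem 3))), hsum]

theorem negDefOn_and_negDefOn_iff_exists [DecidableEq m] (hQ : Q.IsSymm)
    {K₁ K₂ : Submodule ℝ (m → ℝ)} :
    Q.NegDefOn K₁ ∧ Q.NegDefOn K₂ ↔ ∃ M : Matrix m m ℝ, K₁ ≤ LinearMap.ker Mᵀ.mulVecLin ∧
      K₂ ≤ LinearMap.ker M.mulVecLin ∧ (Q + M + Mᵀ).NegDefOn ⊤ := by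
  refine ⟨fun ⟨h₁, h₂⟩ => exists_negDefOn_top_add_add_transpose hQ h₁ h₂,
    fun ⟨M, hM₁, hM₂, hM⟩ => ⟨fun x hx hx0 => ?_, fun x hx hx0 => ?_⟩⟩
  · have hMx : Mᵀ *ᵥ x = 0 := hM₁ hx
    simpa [add_mulVec, dotProduct_transpose_mulVec, dotProduct_mulVec, ← mulVec_transpose, hMx]
      using hM x trivial hx0
  · have hMx : M *ᵥ x = 0 := hM₂ hx
    simpa [add_mulVec, dotProduct_transpose_mulVec, hMx] using hM x trivial hx0

end Matrix

/-- Elimination (projection) lemma, two-constraint form. -/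
theorem elimination_lemma {n b c : ℕ}
    (Q : Matrix (Fin n) (Fin n) ℝ) (hQ : Q.IsSymm)
    (B : Matrix (Fin b) (Fin n) ℝ) (hB : B.rank = b)
    (C : Matrix (Fin c) (Fin n) ℝ) (hC : C.rank = c)
    (Bperp : Matrix (Fin n) (Fin (n - b)) ℝ)
    (hBker : B * Bperp = 0) (hBperp : Bperp.rank = n - b)
    (Cperp : Matrix (Fin n) (Fin (n - c)) ℝ)
    (hCker : C * Cperp = 0) (hCperp : Cperp.rank = n - c) :
    ((-(Bperpᵀ * Q * Bperp)).PosDef ∧ (-(Cperpᵀ * Q * Cperp)).PosDef) ↔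
      ∃ V : Matrix (Fin b) (Fin c) ℝ, (-(Q + Bᵀ * V * C + Cᵀ * Vᵀ * B)).PosDef := by
  have hT (V : Matrix (Fin b) (Fin c) ℝ) : (Bᵀ * V * C)ᵀ = Cᵀ * Vᵀ * B := by
    simp [transpose_mul, Matrix.mul_assoc]
  have hsymm (V : Matrix (Fin b) (Fin c) ℝ) : (Q + Bᵀ * V * C + Cᵀ * Vᵀ * B).IsSymm := by
    simpa [add_assoc, hT] using hQ.add (isSymm_add_transpose_self (Bᵀ * V * C))
  have hBn := B.rank_le_width
  have hCn := C.rank_le_width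
  rw [posDef_neg_transpose_mul_mul_iff_negDefOn_ker hQ hBker
      (by rw [hB, hBperp, Fintype.card_fin]; omega) (by rw [hBperp, Fintype.card_fin]),
    posDef_neg_transpose_mul_mul_iff_negDefOn_ker hQ hCker
      (by rw [hC, hCperp, Fintype.card_fin]; omega) (by rw [hCperp, Fintype.card_fin]),
    negDefOn_and_negDefOn_iff_exists hQ]
  simp_rw [posDef_neg_iff_negDefOn_top (hsymm _), ← hT]
  constructor
  · rintro ⟨M, hM₁, hM₂, hM⟩
    obtain ⟨V, rfl⟩ := exists_eq_transpose_mul_mul_of_ker_le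
      (range_mulVecLin_eq_top_of_rank_eq (by rw [hB, Fintype.card_fin]))
      (range_mulVecLin_eq_top_of_rank_eq (by rw [hC, Fintype.card_fin])) hM₁ hM₂
    exact ⟨V, hM⟩
  · rintro ⟨V, hV⟩
    refine ⟨Bᵀ * V * C, fun x hx => ?_, fun x hx => ?_, hV⟩
    · have hBx : B *ᵥ x = 0 := hx
      simp [hBx]
    · have hCx : C *ᵥ x = 0 := hx
      simp [hCx]
end

section
/- Let N ≥ 1, A ∈ ℝ^{n×n}, B ∈ ℝ^{n×m}, C ∈ ℝ^{p×n}, and let F ∈ ℝ^{Nm×Np} be block lower triangular with m×p blocks. Define the matrix 𝒞(F) := [[F(I_N ⊗ C), −I_{Nm}], [ℒ_{N−1} ⊗ A − ℛ_{N−1} ⊗ I_n, ℒ_{N−1} ⊗ B]], where ℒ_{N−1} = [I_{N−1}, 0] and ℛ_{N−1} = [0, I_{N−1}] are (N−1)×N block selection matrices. Then 𝒞(F) has full row rank equal to (N−1)n + Nm. -/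
/-!
Eliminating the `-I` block leaves the Schur complement `ℒ ⊗ A - ℛ ⊗ I + (ℒ ⊗ B) F (I ⊗ C)`.
Since `F` is block lower triangular, the columns of this complement belonging to the time steps
`1, …, N - 1` form a block lower triangular square matrix with diagonal blocks `-I`. Together
with the columns of the `-I` block they give a nonsingular square submatrix of `𝒞(F)` of full
height.
-/

open Matrix Kronecker

namespace Matrix

variable {K ι X U Y m n : Type*}

theorem rank_eq_card_height_of_det_submatrix_ne_zero [Field K] [Fintype m] [DecidableEq m]
    [Fintype n] (A : Matrix m n K) (c : m → n) (h : (A.submatrix id c).det ≠ 0) :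
    A.rank = Fintype.card m :=
  A.rank_le_card_height.antisymm
    ((rank_of_det_ne_zero h).symm.le.trans (A.rank_submatrix_le id c))

theorem det_fromBlocks_neg_one₁₁ [CommRing K] [Fintype m] [Fintype n] [DecidableEq m]
    [DecidableEq n] (B : Matrix m n K) (C : Matrix n m K) (D : Matrix n n K) :
    (fromBlocks (-1) B C D).det = (-1) ^ Fintype.card m * (D + C * B).det := by
  have : Invertible (1 : Matrix m m K) := invertibleOne
  have : Invertible (-1 : Matrix m m K) := invertibleNeg 1
  rw [det_fromBlocks₁₁, invOf_neg, invOf_one, det_neg, det_one, mul_one, Matrix.mul_neg,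
    Matrix.mul_one, Matrix.neg_mul, sub_neg_eq_add]

theorem rank_fromBlocks_neg_one_eq_card [Field K] {r c s : Type*} [Fintype r] [DecidableEq r]
    [Fintype c] [Fintype s] [DecidableEq s] (A : Matrix r c K) (C : Matrix s c K)
    (D : Matrix s r K) (f : s → c) (h : ((C + D * A).submatrix id f).det ≠ 0) :
    (fromBlocks A (-1) C D).rank = Fintype.card r + Fintype.card s := by
  have hsub : (fromBlocks A (-1) C D).submatrix id (Sum.elim Sum.inr (Sum.inl ∘ f)) =
      fromBlocks (-1) (A.submatrix id f) D (C.submatrix id f) := by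
    ext (i | i) (j | j) <;> rfl
  rw [rank_eq_card_height_of_det_submatrix_ne_zero _ _ (by
    rw [hsub, det_fromBlocks_neg_one₁₁]
    exact mul_ne_zero (by simp) h), Fintype.card_sum]

theorem det_eq_det_pow_of_blockLowerTriangular [CommRing K] [Fintype ι] [LinearOrder ι]
    [Fintype X] [DecidableEq X] (W : Matrix (ι × X) (ι × X) K) (D : Matrix X X K)
    (hW : ∀ i j x y, i < j → W (i, x) (j, y) = 0) (hD : ∀ i x y, W (i, x) (i, y) = D x y) :
    W.det = D.det ^ Fintype.card ι := by
  classical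
  have hT : W.BlockTriangular (fun q => OrderDual.toDual q.1) :=
    fun q r h => hW q.1 r.1 q.2 r.2 h
  rw [hT.det_fintype, ← Fintype.card_orderDual, ← Finset.card_univ, ← Finset.prod_const]
  refine Finset.prod_congr rfl fun k _ => ?_
  let e : X ≃ {q : ι × X // OrderDual.toDual q.1 = k} :=
    { toFun := fun x => ⟨(OrderDual.ofDual k, x), rfl⟩
      invFun := fun q => q.1.2
      left_inv := fun x => rfl
      right_inv := fun ⟨⟨i, x⟩, h⟩ => by subst h; rfl }
  rw [← det_submatrix_equiv_self e]
  congr 1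
  ext x y
  exact hD _ x y

theorem mul_one_kronecker_apply_of_lt [CommRing K] [Fintype ι] [DecidableEq ι] [LT ι]
    [Fintype Y] {F : Matrix (ι × U) (ι × Y) K} (hF : ∀ a b u y, a < b → F (a, u) (b, y) = 0)
    (C : Matrix Y X K) {a b : ι} (hab : a < b) (u : U) (x : X) :
    (F * ((1 : Matrix ι ι K) ⊗ₖ C)) (a, u) (b, x) = 0 := by
  rw [mul_apply]
  refine Finset.sum_eq_zero fun ⟨c, y⟩ _ => ?_
  rcases eq_or_ne c b with rfl | hcb
  · rw [hF a c u y hab, zero_mul]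
  · rw [kroneckerMap_apply, one_apply_ne hcb, zero_mul, mul_zero]

end Matrix

def Fin.succSubOne {N : ℕ} (j : Fin (N - 1)) : Fin N :=
  ⟨j + 1, Nat.add_lt_of_lt_sub j.isLt⟩

theorem schurComplement_apply_succSubOne {K X U Y : Type*} [CommRing K] [DecidableEq X]
    [Fintype U] [Fintype Y] {N : ℕ} {L R : Matrix (Fin (N - 1)) (Fin N) K}
    (hL : ∀ (i : Fin (N - 1)) (j : Fin N), L i j = if (j : ℕ) = (i : ℕ) then 1 else 0)
    (hR : ∀ (i : Fin (N - 1)) (j : Fin N), R i j = if (j : ℕ) = (i : ℕ) + 1 then 1 else 0)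
    (A : Matrix X X K) (B : Matrix X U K) (C : Matrix Y X K)
    {F : Matrix (Fin N × U) (Fin N × Y) K}
    (hF : ∀ (a b : Fin N) (u : U) (y : Y), (a : ℕ) < (b : ℕ) → F (a, u) (b, y) = 0)
    {i j : Fin (N - 1)} (hij : (i : ℕ) ≤ j) (x y : X) :
    (L ⊗ₖ A - R ⊗ₖ (1 : Matrix X X K) + L ⊗ₖ B * (F * ((1 : Matrix (Fin N) (Fin N) K) ⊗ₖ C)))
      (i, x) (j.succSubOne, y) = if i = j then -(1 : Matrix X X K) x y else 0 := by
  have hLA : (L ⊗ₖ A) (i, x) (j.succSubOne, y) = 0 := by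
    rw [kroneckerMap_apply, hL, if_neg (by simp [Fin.succSubOne]; omega), zero_mul]
  have hR1 : (R ⊗ₖ (1 : Matrix X X K)) (i, x) (j.succSubOne, y) =
      if i = j then (1 : Matrix X X K) x y else 0 := by
    simp [kroneckerMap_apply, hR, Fin.succSubOne, Fin.val_eq_val, eq_comm]
  have hLBP : (L ⊗ₖ B * (F * ((1 : Matrix (Fin N) (Fin N) K) ⊗ₖ C)))
      (i, x) (j.succSubOne, y) = 0 := by
    rw [mul_apply]
    refine Finset.sum_eq_zero fun ⟨a, u⟩ _ => ?_
    by_cases hai : (a : ℕ) = i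
    · rw [mul_one_kronecker_apply_of_lt hF C (by simp [Fin.lt_def, Fin.succSubOne]; omega),
        mul_zero]
    · rw [kroneckerMap_apply, hL, if_neg hai, zero_mul, zero_mul]
  rw [Matrix.add_apply, Matrix.sub_apply, hLA, hR1, hLBP]
  split_ifs <;> simp

theorem constraint_matrix_full_row_rank_general {N n m p : ℕ}
    (A : Matrix (Fin n) (Fin n) ℝ) (B : Matrix (Fin n) (Fin m) ℝ)
    (C : Matrix (Fin p) (Fin n) ℝ)
    (F : Matrix (Fin N × Fin m) (Fin N × Fin p) ℝ)
    (hF : ∀ (a b : Fin N) (i : Fin m) (j : Fin p), (a : ℕ) < (b : ℕ) → F (a, i) (b, j) = 0)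
    (L R : Matrix (Fin (N - 1)) (Fin N) ℝ)
    (hL : ∀ (i : Fin (N - 1)) (j : Fin N), L i j = if (j : ℕ) = (i : ℕ) then 1 else 0)
    (hR : ∀ (i : Fin (N - 1)) (j : Fin N), R i j = if (j : ℕ) = (i : ℕ) + 1 then 1 else 0) :
    (Matrix.fromBlocks
        (F * ((1 : Matrix (Fin N) (Fin N) ℝ) ⊗ₖ C))
        (-(1 : Matrix (Fin N × Fin m) (Fin N × Fin m) ℝ))
        (L ⊗ₖ A - R ⊗ₖ (1 : Matrix (Fin n) (Fin n) ℝ))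
        (L ⊗ₖ B)).rank = (N - 1) * n + N * m := by
  let shift : Fin (N - 1) × Fin n → Fin N × Fin n := Prod.map Fin.succSubOne id
  have hdet := det_eq_det_pow_of_blockLowerTriangular
    ((L ⊗ₖ A - R ⊗ₖ 1 + L ⊗ₖ B * (F * ((1 : Matrix (Fin N) (Fin N) ℝ) ⊗ₖ C))).submatrix id shift)
    (-1)
    (fun i j x y hij => by
      simp [shift, schurComplement_apply_succSubOne hL hR A B C hF hij.le, hij.ne])
    (fun i x y => by simp [shift, schurComplement_apply_succSubOne hL hR A B C hF le_rfl])
  rw [rank_fromBlocks_neg_one_eq_card _ _ _ shift (by simp [hdet, det_neg])]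
  simp [add_comm]

/-- The constraint matrix `𝒞(F)` built from a block lower triangular periodic
output-feedback gain has full row rank `(N−1)n + Nm`. -/
theorem constraint_matrix_full_row_rank {N n m p : ℕ} (hN : 1 ≤ N)
    (A : Matrix (Fin n) (Fin n) ℝ) (B : Matrix (Fin n) (Fin m) ℝ)
    (C : Matrix (Fin p) (Fin n) ℝ)
    (F : Matrix (Fin N × Fin m) (Fin N × Fin p) ℝ)
    (hF : ∀ (a b : Fin N) (i : Fin m) (j : Fin p), (a : ℕ) < (b : ℕ) → F (a, i) (b, j) = 0)
    (L R : Matrix (Fin (N - 1)) (Fin N) ℝ)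
    (hL : ∀ (i : Fin (N - 1)) (j : Fin N), L i j = if (j : ℕ) = (i : ℕ) then 1 else 0)
    (hR : ∀ (i : Fin (N - 1)) (j : Fin N), R i j = if (j : ℕ) = (i : ℕ) + 1 then 1 else 0) :
    (Matrix.fromBlocks
        (F * ((1 : Matrix (Fin N) (Fin N) ℝ) ⊗ₖ C))
        (-(1 : Matrix (Fin N × Fin m) (Fin N × Fin m) ℝ))
        (L ⊗ₖ A - R ⊗ₖ (1 : Matrix (Fin n) (Fin n) ℝ))
        (L ⊗ₖ B)).rank = (N - 1) * n + N * m :=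
  constraint_matrix_full_row_rank_general A B C F hF L R hL hR
end

section
/- Let A, B, C be real matrices of sizes n×n, n×m, p×n, and P symmetric positive definite of size n. The following are equivalent: (i) there exists F ∈ ℝ^{m×p} such that (A + BFC)ᵀ P (A + BFC) − P ≺ 0; (ii) there exists F ∈ ℝ^{m×p} and a matrix M ∈ ℝ^{(n+m)×m} such that Πᵀ 𝒳(P) Π + M [FC, −I_m] + [FC, −I_m]ᵀ Mᵀ ≺ 0, where Π := [[I_n, 0], [A, B]] and 𝒳(P) := diag(−P, P). -/
/-!
With `G = F C`, write `W = [G, -1]` for the constraint and `K = [1; G]` for the basis of its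
kernel. Since `W K = 0`, compressing `R + M W + Wᴴ Mᴴ` to `K` leaves `Kᴴ R K`. Conversely, in the coordinates
`T = [K, E]`, `E = [0; 1]`, the constraint becomes `W T = [0, -1]`, so the multiplier `N = Tᴴ M`
is free to cancel both off-diagonal blocks of `Tᴴ R T` and to turn its lower-right block into `1`,
which leaves `diag (Kᴴ R K, 1)`.
-/

open Matrix
open scoped ComplexOrder

namespace Matrix

variable {𝕜 : Type*} [RCLike 𝕜]

theorem PosDef.fromBlocks_zero {ι κ : Type*} [Fintype ι] [Fintype κ] {A : Matrix ι ι 𝕜}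
    {D : Matrix κ κ 𝕜} (hA : A.PosDef) (hD : D.PosDef) : (fromBlocks A 0 0 D).PosDef := by
  refine .of_dotProduct_mulVec_pos (hA.1.fromBlocks (by simp) hD.1) fun x hx => ?_
  obtain ⟨u, v, rfl⟩ : ∃ u v, x = Sum.elim u v := ⟨_, _, (Sum.elim_comp_inl_inr x).symm⟩
  rw [fromBlocks_mulVec, Function.star_sumElim]
  simp only [zero_mulVec, add_zero, zero_add, sumElim_dotProduct_sumElim]
  by_cases hu : u = 0
  · subst hu
    have hv : v ≠ 0 := by rintro rfl; simp at hx
    simpa using hD.dotProduct_mulVec_pos hv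
  · exact add_pos_of_pos_of_nonneg (hA.dotProduct_mulVec_pos hu)
      (hD.posSemidef.dotProduct_mulVec_nonneg v)

theorem PosDef.conjTranspose_mul_mul_of_mul_eq_zero {n k l : Type*} [Fintype n] [Fintype k]
    [Fintype l] {R : Matrix n n 𝕜} {W : Matrix k n 𝕜} {K : Matrix n l 𝕜} {M : Matrix n k 𝕜}
    (h : (R + M * W + Wᴴ * Mᴴ).PosDef) (hWK : W * K = 0) (hK : Function.Injective K.mulVec) :
    (Kᴴ * R * K).PosDef := by
  convert h.conjTranspose_mul_mul_same hK using 1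
  calc Kᴴ * R * K = Kᴴ * R * K + Kᴴ * M * (W * K) + (W * K)ᴴ * Mᴴ * K := by simp [hWK]
    _ = Kᴴ * (R + M * W + Wᴴ * Mᴴ) * K := by
      simp only [conjTranspose_mul, Matrix.mul_add, Matrix.add_mul, Matrix.mul_assoc]

section Graph

variable {ι κ : Type*} [Fintype ι] [DecidableEq ι]

theorem mulVec_injective_fromRows_one (G : Matrix κ ι 𝕜) :
    Function.Injective (fromRows (1 : Matrix ι ι 𝕜) G).mulVec := fun x y h => by
  simpa using congrArg (· ∘ Sum.inl) h

variable [Fintype κ] [DecidableEq κ]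

theorem fromCols_neg_one_mul_fromRows_one (G : Matrix κ ι 𝕜) :
    fromCols G (-1 : Matrix κ κ 𝕜) * fromRows (1 : Matrix ι ι 𝕜) G = 0 := by
  simp [fromCols_mul_fromRows]

theorem exists_posDef_add_mul_fromCols_of_posDef {R : Matrix (ι ⊕ κ) (ι ⊕ κ) 𝕜}
    (hR : R.IsHermitian) {G : Matrix κ ι 𝕜}
    (h : ((fromRows (1 : Matrix ι ι 𝕜) G)ᴴ * R * fromRows (1 : Matrix ι ι 𝕜) G).PosDef) :
    ∃ M : Matrix (ι ⊕ κ) κ 𝕜, (R + M * fromCols G (-1) + (fromCols G (-1))ᴴ * Mᴴ).PosDef := by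
  set K : Matrix (ι ⊕ κ) ι 𝕜 := fromRows 1 G
  set W : Matrix κ (ι ⊕ κ) 𝕜 := fromCols G (-1)
  let E : Matrix (ι ⊕ κ) κ 𝕜 := fromRows 0 1
  let T := fromCols K E
  let U : Matrix (ι ⊕ κ) (ι ⊕ κ) 𝕜 := fromBlocks 1 0 (-G) 1
  have hUT : U * T = 1 := by
    rw [← fromBlocks_one, ← fromCols_fromRows_eq_fromBlocks]
    simp [U, T, K, E, -fromCols_fromRows_eq_fromBlocks, fromBlocks_mul_fromRows]
  have hWT : W * T = fromCols 0 (-1) := by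
    simp [W, T, K, E, -fromCols_fromRows_eq_fromBlocks, fromCols_mul_fromRows]
  have hRE : (Eᴴ * R * E)ᴴ = Eᴴ * R * E := by simp [conjTranspose_mul, hR.eq, Matrix.mul_assoc]
  -- `N₂ + N₂ᴴ = Eᴴ R E - 1`
  let N₂ := (2⁻¹ : 𝕜) • (Eᴴ * R * E - 1)
  let N := fromRows (Kᴴ * R * E) N₂
  refine ⟨Uᴴ * N, ?_⟩
  rw [← (IsUnit.of_mul_eq_one_right U hUT).posDef_star_left_conjugate_iff, star_eq_conjTranspose]
  suffices hTLT : Tᴴ * (R + Uᴴ * N * W + Wᴴ * (Uᴴ * N)ᴴ) * T = fromBlocks (Kᴴ * R * K) 0 0 1 by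
    rw [hTLT]
    exact h.fromBlocks_zero .one
  calc Tᴴ * (R + Uᴴ * N * W + Wᴴ * (Uᴴ * N)ᴴ) * T
      = Tᴴ * R * T + (U * T)ᴴ * N * (W * T) + (W * T)ᴴ * Nᴴ * (U * T) := by
        simp only [Matrix.mul_add, Matrix.add_mul, conjTranspose_mul, conjTranspose_conjTranspose,
          Matrix.mul_assoc]
    _ = fromBlocks (Kᴴ * R * K) (Kᴴ * R * E) (Eᴴ * R * K) (Eᴴ * R * E) +
          fromBlocks 0 (-(Kᴴ * R * E)) 0 (-N₂) + fromBlocks 0 0 (-(Kᴴ * R * E)ᴴ) (-N₂ᴴ) := by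
        rw [hUT, hWT]
        simp [T, N, conjTranspose_fromCols_eq_fromRows_conjTranspose,
          conjTranspose_fromRows_eq_fromCols_conjTranspose]
        rw [← fromRows_zero, fromCols_fromRows_eq_fromBlocks]
    _ = fromBlocks (Kᴴ * R * K) 0 0 1 := by
        rw [fromBlocks_add, fromBlocks_add]
        congr 1
        · simp
        · simp
        · simp [conjTranspose_mul, hR.eq, Matrix.mul_assoc]
        · simp only [N₂, conjTranspose_smul, conjTranspose_sub, hRE, conjTranspose_one,
            star_inv₀, star_ofNat]
          module

theorem finsler_fromRows_one_iff {R : Matrix (ι ⊕ κ) (ι ⊕ κ) 𝕜} (hR : R.IsHermitian)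
    (G : Matrix κ ι 𝕜) :
    ((fromRows (1 : Matrix ι ι 𝕜) G)ᴴ * R * fromRows (1 : Matrix ι ι 𝕜) G).PosDef ↔
      ∃ M : Matrix (ι ⊕ κ) κ 𝕜, (R + M * fromCols G (-1) + (fromCols G (-1))ᴴ * Mᴴ).PosDef :=
  ⟨exists_posDef_add_mul_fromCols_of_posDef hR, fun ⟨_, hM⟩ =>
    hM.conjTranspose_mul_mul_of_mul_eq_zero (fromCols_neg_one_mul_fromRows_one G)
      (mulVec_injective_fromRows_one G)⟩

end Graph

end Matrix

/-- Theorem 1 for `N = 1`: BMI characterization of static output feedback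
stabilizability with a fixed Lyapunov matrix `P`, via Finsler's lemma. -/
theorem sof_bmi_characterization {n m p : ℕ}
    (A : Matrix (Fin n) (Fin n) ℝ) (B : Matrix (Fin n) (Fin m) ℝ)
    (C : Matrix (Fin p) (Fin n) ℝ) (P : Matrix (Fin n) (Fin n) ℝ) (hP : P.PosDef) :
    (∃ F : Matrix (Fin m) (Fin p) ℝ,
        (-((A + B * F * C)ᵀ * P * (A + B * F * C) - P)).PosDef) ↔
    (∃ (F : Matrix (Fin m) (Fin p) ℝ) (M : Matrix (Fin n ⊕ Fin m) (Fin m) ℝ),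
        (-((Matrix.fromBlocks (1 : Matrix (Fin n) (Fin n) ℝ) (0 : Matrix (Fin n) (Fin m) ℝ) A B)ᵀ *
            Matrix.fromBlocks (-P) 0 0 P *
            Matrix.fromBlocks (1 : Matrix (Fin n) (Fin n) ℝ) (0 : Matrix (Fin n) (Fin m) ℝ) A B +
            M * Matrix.fromCols (F * C) (-(1 : Matrix (Fin m) (Fin m) ℝ)) +
            (Matrix.fromCols (F * C) (-(1 : Matrix (Fin m) (Fin m) ℝ)))ᵀ * Mᵀ)).PosDef) := by
  set Φ : Matrix (Fin n ⊕ Fin n) (Fin n ⊕ Fin m) ℝ := fromBlocks 1 0 A B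
  set X : Matrix (Fin n ⊕ Fin n) (Fin n ⊕ Fin n) ℝ := fromBlocks (-P) 0 0 P
  have hR : (-(Φᴴ * X * Φ)).IsHermitian :=
    (isHermitian_conjTranspose_mul_mul Φ (hP.1.neg.fromBlocks (by simp) hP.1)).neg
  refine exists_congr fun F => ?_
  have hΦK : Φ * fromRows (1 : Matrix (Fin n) (Fin n) ℝ) (F * C) =
      fromRows (1 : Matrix (Fin n) (Fin n) ℝ) (A + B * F * C) := by
    rw [fromBlocks_mul_fromRows]
    simp [Matrix.mul_assoc]
  have hcompress : (fromRows (1 : Matrix (Fin n) (Fin n) ℝ) (F * C))ᴴ * -(Φᴴ * X * Φ) *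
      fromRows (1 : Matrix (Fin n) (Fin n) ℝ) (F * C) =
      -((A + B * F * C)ᵀ * P * (A + B * F * C) - P) := by
    rw [Matrix.mul_neg, Matrix.neg_mul, ← Matrix.mul_assoc, ← Matrix.mul_assoc,
      ← conjTranspose_mul, Matrix.mul_assoc, hΦK]
    simp [X, conjTranspose_eq_transpose_of_trivial, transpose_fromRows, fromCols_mul_fromBlocks,
      fromCols_mul_fromRows, neg_add_eq_sub]
  rw [← hcompress, finsler_fromRows_one_iff hR]
  refine (Equiv.neg _).exists_congr fun M => ?_
  simp only [conjTranspose_eq_transpose_of_trivial, Equiv.neg_apply, transpose_neg, neg_add,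
    Matrix.neg_mul, Matrix.mul_neg, neg_neg]
end
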